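/- arXiv:2506.20955 — 2 statements merged into one kernel-verified Lean document; each statement's English description precedes it below -/
import Mathlib

section
/- If θ̄ ≥ 8a/(27Rb) (the supercritical regime, in which v ↦ p(v,θ̄) is strictly decreasing on (b,∞)), then Φ(v) > 0 for every v ∈ (b, ∞) with v ≠ v̄. -/
/-- The energy function
`Φ(v) = (1/θ̄)[(Rθ̄/(v̄−b) − a/v̄²)(v − v̄) − (a/v − a/v̄) − Rθ̄ ln((v−b)/(v̄−b))]`. -/
noncomputable def PhiVdw (a b R vbar θbar v : ℝ) : ℝ :=
  (1 / θbar) * ((R * θbar / (vbar - b) - a / vbar ^ 2) * (v - vbar)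
    - (a / v - a / vbar) - R * θbar * Real.log ((v - b) / (vbar - b)))

/-!
Since `Φ(v̄) = 0` and `Φ'(v) = (p(v̄, θ̄) - p(v, θ̄)) / θ̄`, it suffices that `v ↦ p(v, θ̄)` is
strictly decreasing on `(b, ∞)`: then `Φ` decreases to `0` on `(b, v̄]` and increases from `0` on
`[v̄, ∞)`. The derivative `2a/v³ - Rθ̄/(v-b)²` of `p` is negative except possibly at `v = 3b`,
because `4v³ - 27b(v-b)² = (v-3b)²(4v-3b)` gives `2a(v-b)² ≤ (8a/27b)v³ ≤ Rθ̄v³` on `(b, ∞)`.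
-/

open Set

theorem strictAntiOn_of_hasDerivAt_neg_of_ne {D : Set ℝ} (hD : Convex ℝ D) {f f' : ℝ → ℝ}
    {c : ℝ} (hc : c ∈ D) (hf : ∀ x ∈ D, HasDerivAt f (f' x) x)
    (hf' : ∀ x ∈ D, x ≠ c → f' x < 0) : StrictAntiOn f D := by
  have strictAntiOn_of_subset {s : Set ℝ} (hs : Convex ℝ s) (hsD : s ⊆ D)
      (hcs : c ∉ interior s) : StrictAntiOn f s :=
    strictAntiOn_of_deriv_neg hs
      (fun x hx ↦ (hf x (hsD hx)).continuousAt.continuousWithinAt) fun x hx ↦ by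
        rw [(hf x (hsD (interior_subset hx))).deriv]
        exact hf' x (hsD (interior_subset hx)) (ne_of_mem_of_not_mem hx hcs)
  have hleft := strictAntiOn_of_subset (hD.inter (convex_Iic c)) inter_subset_left fun h ↦
    (lt_irrefl c) (by simpa using interior_mono inter_subset_right h)
  have hright := strictAntiOn_of_subset (hD.inter (convex_Ici c)) inter_subset_left fun h ↦
    (lt_irrefl c) (by simpa using interior_mono inter_subset_right h)
  have h := hleft.union hright ⟨⟨hc, self_mem_Iic⟩, fun _ hx ↦ hx.2⟩
    ⟨⟨hc, self_mem_Ici⟩, fun _ hx ↦ hx.2⟩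
  rwa [← inter_union_distrib_left, Iic_union_Ici, inter_univ] at h

theorem lt_of_hasDerivAt_neg_of_pos {D : Set ℝ} (hD : Convex ℝ D) {f f' : ℝ → ℝ} {c : ℝ}
    (hc : c ∈ D) (hf : ∀ x ∈ D, HasDerivAt f (f' x) x) (hneg : ∀ x ∈ D, x < c → f' x < 0)
    (hpos : ∀ x ∈ D, c < x → 0 < f' x) {x : ℝ} (hx : x ∈ D) (hxc : x ≠ c) : f c < f x := by
  have hcont {y z : ℝ} (hy : y ∈ D) (hz : z ∈ D) : ContinuousOn f (Icc y z) := fun w hw ↦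
    (hf w (hD.ordConnected.out hy hz hw)).continuousAt.continuousWithinAt
  have hmem {y z w : ℝ} (hy : y ∈ D) (hz : z ∈ D) (hw : w ∈ interior (Icc y z)) :
      w ∈ D ∧ w ∈ Ioo y z := by
    rw [interior_Icc] at hw
    exact ⟨hD.ordConnected.out hy hz (Ioo_subset_Icc_self hw), hw⟩
  rcases hxc.lt_or_gt with hlt | hgt
  · refine strictAntiOn_of_deriv_neg (convex_Icc x c) (hcont hx hc) (fun w hw ↦ ?_)
      (left_mem_Icc.2 hlt.le) (right_mem_Icc.2 hlt.le) hlt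
    obtain ⟨hwD, hw⟩ := hmem hx hc hw
    rw [(hf w hwD).deriv]
    exact hneg w hwD hw.2
  · refine strictMonoOn_of_deriv_pos (convex_Icc c x) (hcont hc hx) (fun w hw ↦ ?_)
      (left_mem_Icc.2 hgt.le) (right_mem_Icc.2 hgt.le) hgt
    obtain ⟨hwD, hw⟩ := hmem hc hx hw
    rw [(hf w hwD).deriv]
    exact hpos w hwD hw.1

noncomputable def vdwPressure (a b R θ v : ℝ) : ℝ :=
  -a / v ^ 2 + R * θ / (v - b)

theorem hasDerivAt_vdwPressure (a b R θ : ℝ) {v : ℝ} (hv : v ≠ 0) (hvb : v ≠ b) :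
    HasDerivAt (vdwPressure a b R θ) (2 * a / v ^ 3 - R * θ / (v - b) ^ 2) v := by
  refine (((hasDerivAt_const v (-a)).fun_div (hasDerivAt_pow 2 v) (pow_ne_zero 2 hv)).fun_add
    ((hasDerivAt_const v (R * θ)).fun_div ((hasDerivAt_id' v).sub_const b)
      (sub_ne_zero.2 hvb))).congr_deriv ?_
  field_simp
  ring

theorem vdwPressure_deriv_neg {a b R θ v : ℝ} (ha : 0 < a) (hb : 0 < b)
    (hsup : 8 * a ≤ 27 * b * (R * θ)) (hv : b < v) (hv3 : v ≠ 3 * b) :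
    2 * a / v ^ 3 - R * θ / (v - b) ^ 2 < 0 := by
  have hcubic : 27 * b * (v - b) ^ 2 < 4 * v ^ 3 := by
    have hfactor : 4 * v ^ 3 - 27 * b * (v - b) ^ 2 = (v - 3 * b) ^ 2 * (4 * v - 3 * b) := by
      ring
    have hpos : 0 < (v - 3 * b) ^ 2 * (4 * v - 3 * b) :=
      mul_pos (sq_pos_of_ne_zero (sub_ne_zero.2 hv3)) (by linarith)
    linarith
  have hkey : 2 * a * (v - b) ^ 2 < R * θ * v ^ 3 := by
    have hv0 : 0 ≤ v ^ 3 := (pow_pos (hb.trans hv) 3).le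
    refine lt_of_mul_lt_mul_left ?_ (by positivity : 0 ≤ 27 * b)
    calc 27 * b * (2 * a * (v - b) ^ 2) = 2 * a * (27 * b * (v - b) ^ 2) := by ring
      _ < 2 * a * (4 * v ^ 3) := by gcongr
      _ = 8 * a * v ^ 3 := by ring
      _ ≤ 27 * b * (R * θ) * v ^ 3 := by gcongr
      _ = 27 * b * (R * θ * v ^ 3) := by ring
  rw [sub_neg, div_lt_div_iff₀ (pow_pos (hb.trans hv) 3) (pow_pos (sub_pos.2 hv) 2)]
  exact hkey

theorem vdwPressure_strictAntiOn {a b R θ : ℝ} (ha : 0 < a) (hb : 0 < b)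
    (hsup : 8 * a ≤ 27 * b * (R * θ)) : StrictAntiOn (vdwPressure a b R θ) (Ioi b) :=
  strictAntiOn_of_hasDerivAt_neg_of_ne (convex_Ioi b) (c := 3 * b) (mem_Ioi.2 (by linarith))
    (fun v hv ↦ hasDerivAt_vdwPressure a b R θ (hb.trans hv).ne' (ne_of_gt hv))
    fun v hv hv3 ↦ vdwPressure_deriv_neg ha hb hsup hv hv3

theorem hasDerivAt_PhiVdw (a b R θbar : ℝ) {vbar v : ℝ} (hvbar : vbar ≠ b) (hv : v ≠ 0)
    (hvb : v ≠ b) :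
    HasDerivAt (PhiVdw a b R vbar θbar)
      ((vdwPressure a b R θbar vbar - vdwPressure a b R θbar v) / θbar) v := by
  have hlog := (((hasDerivAt_id' v).sub_const b).div_const (vbar - b)).log
    (div_ne_zero (sub_ne_zero.2 hvb) (sub_ne_zero.2 hvbar))
  refine (((((hasDerivAt_id' v).sub_const vbar).const_mul _).sub
    (((hasDerivAt_inv hv).const_mul a).sub_const (a / vbar))).sub
    (hlog.const_mul (R * θbar))).const_mul (1 / θbar) |>.congr_deriv ?_
  simp only [vdwPressure]
  field_simp
  ring

theorem PhiVdw_self (a b R θbar : ℝ) {vbar : ℝ} (hvbar : vbar ≠ b) :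
    PhiVdw a b R vbar θbar vbar = 0 := by
  simp [PhiVdw, div_self (sub_ne_zero.2 hvbar)]

/-- In the supercritical regime `θ̄ ≥ 8a/(27Rb)` (where `v ↦ p(v,θ̄)` is
strictly decreasing on `(b,∞)`), `Φ(v) > 0` for every `v ∈ (b,∞)` with `v ≠ v̄`. -/
theorem PhiVdw_pos_supercritical
    (a b R vbar θbar : ℝ) (ha : 0 < a) (hb : 0 < b) (hR : 0 < R)
    (hvbar : b < vbar) (hθbar : 0 < θbar)
    (hsup : 8 * a / (27 * R * b) ≤ θbar) :
    ∀ v, b < v → v ≠ vbar → 0 < PhiVdw a b R vbar θbar v := by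
  intro v hv hne
  have hsup' : 8 * a ≤ 27 * b * (R * θbar) := by
    rw [div_le_iff₀ (by positivity)] at hsup
    linarith
  have hp := vdwPressure_strictAntiOn ha hb hsup'
  have h := lt_of_hasDerivAt_neg_of_pos (convex_Ioi b) hvbar
    (fun x hx ↦ hasDerivAt_PhiVdw a b R θbar hvbar.ne' (hb.trans hx).ne' (ne_of_gt hx))
    (fun x hx hxc ↦ div_neg_of_neg_of_pos (sub_neg.2 (hp hx hvbar hxc)) hθbar)
    (fun x hx hxc ↦ div_pos (sub_pos.2 (hp hvbar hx hxc)) hθbar) hv hne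
  rwa [PhiVdw_self a b R θbar hvbar.ne'] at h
end

section
/- Let ε > 0 and let (v, u, θ, χ) be real-valued C² functions of (x,t) on an open subset U of ℝ² with v > b on U, satisfying pointwise the equations v_t = u_x and u_t + (Rθ/(v−b) − a/v²)_x = (u_x/v)_x − (ε/2)(χ_x²/v²)_x. Then the effective-flux identity ∂_t( u − v_x/v ) + ∂_x( Rθ/(v−b) ) = ∂_x( a/v² − (ε/2)(χ_x/v)² ) holds pointwise on U. -/
/-!
Subtracting the momentum equation, everything reduces to `(v_x / v)_t = (u_x / v)_x`. By the
quotient rule the two sides are `(v_{xt} v - v_x v_t) / v²` and `(u_{xx} v - u_x v_x) / v²`; the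
mass equation gives `v_t = u_x` and, since the mixed partials of the `C²` function `v` commute,
also `v_{xt} = v_{tx} = u_{xx}`. The remaining terms agree by linearity of `∂_x` and `∂_t`.
-/

/-- Partial derivative in the first (spatial) variable. -/
noncomputable def pdx (f : ℝ → ℝ → ℝ) (x t : ℝ) : ℝ := deriv (fun y => f y t) x

/-- Partial derivative in the second (time) variable. -/
noncomputable def pdt (f : ℝ → ℝ → ℝ) (x t : ℝ) : ℝ := deriv (fun s => f x s) t

open Filter Topology

section Slices

variable {F : Type*} [NormedAddCommGroup F] [NormedSpace ℝ F] {G : ℝ × ℝ → F} {x t : ℝ}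

theorem hasDerivAt_slice_fst (hG : DifferentiableAt ℝ G (x, t)) :
    HasDerivAt (fun y => G (y, t)) (fderiv ℝ G (x, t) (1, 0)) x :=
  hG.hasFDerivAt.comp_hasDerivAt x ((hasDerivAt_id x).prodMk (hasDerivAt_const x t))

theorem hasDerivAt_slice_snd (hG : DifferentiableAt ℝ G (x, t)) :
    HasDerivAt (fun s => G (x, s)) (fderiv ℝ G (x, t) (0, 1)) t :=
  hG.hasFDerivAt.comp_hasDerivAt t ((hasDerivAt_const t x).prodMk (hasDerivAt_id t))

theorem eventually_slice_fst_mem {U : Set (ℝ × ℝ)} (hU : IsOpen U) (hp : (x, t) ∈ U) :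
    ∀ᶠ y in 𝓝 x, (y, t) ∈ U :=
  (continuous_id.prodMk continuous_const).continuousAt.preimage_mem_nhds (hU.mem_nhds hp)

theorem eventually_slice_snd_mem {U : Set (ℝ × ℝ)} (hU : IsOpen U) (hp : (x, t) ∈ U) :
    ∀ᶠ s in 𝓝 t, (x, s) ∈ U :=
  (continuous_const.prodMk continuous_id).continuousAt.preimage_mem_nhds (hU.mem_nhds hp)

end Slices

section PartialDerivatives

variable {f g : ℝ → ℝ → ℝ} {U : Set (ℝ × ℝ)} {x t : ℝ}

theorem pdx_eq_fderiv (hf : DifferentiableAt ℝ (fun p : ℝ × ℝ => f p.1 p.2) (x, t)) :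
    pdx f x t = fderiv ℝ (fun p : ℝ × ℝ => f p.1 p.2) (x, t) (1, 0) :=
  (hasDerivAt_slice_fst hf).deriv

theorem pdt_eq_fderiv (hf : DifferentiableAt ℝ (fun p : ℝ × ℝ => f p.1 p.2) (x, t)) :
    pdt f x t = fderiv ℝ (fun p : ℝ × ℝ => f p.1 p.2) (x, t) (0, 1) :=
  (hasDerivAt_slice_snd hf).deriv

theorem DifferentiableOn.hasDerivAt_pdx
    (hf : DifferentiableOn ℝ (fun p : ℝ × ℝ => f p.1 p.2) U) (hU : IsOpen U)
    (hp : (x, t) ∈ U) : HasDerivAt (fun y => f y t) (pdx f x t) x :=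
  (hasDerivAt_slice_fst (hf.differentiableAt (hU.mem_nhds hp))).differentiableAt.hasDerivAt

theorem DifferentiableOn.hasDerivAt_pdt
    (hf : DifferentiableOn ℝ (fun p : ℝ × ℝ => f p.1 p.2) U) (hU : IsOpen U)
    (hp : (x, t) ∈ U) : HasDerivAt (fun s => f x s) (pdt f x t) t :=
  (hasDerivAt_slice_snd (hf.differentiableAt (hU.mem_nhds hp))).differentiableAt.hasDerivAt

theorem pdx_congr (hU : IsOpen U) (hfg : ∀ p ∈ U, f p.1 p.2 = g p.1 p.2) (hp : (x, t) ∈ U) :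
    pdx f x t = pdx g x t :=
  EventuallyEq.deriv_eq ((eventually_slice_fst_mem hU hp).mono fun y hy => hfg (y, t) hy)

theorem pdt_congr (hU : IsOpen U) (hfg : ∀ p ∈ U, f p.1 p.2 = g p.1 p.2) (hp : (x, t) ∈ U) :
    pdt f x t = pdt g x t :=
  EventuallyEq.deriv_eq ((eventually_slice_snd_mem hU hp).mono fun s hs => hfg (x, s) hs)

theorem pdx_sub (hf : DifferentiableAt ℝ (fun y => f y t) x)
    (hg : DifferentiableAt ℝ (fun y => g y t) x) :
    pdx (fun x t => f x t - g x t) x t = pdx f x t - pdx g x t :=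
  deriv_fun_sub hf hg

theorem pdt_sub (hf : DifferentiableAt ℝ (fun s => f x s) t)
    (hg : DifferentiableAt ℝ (fun s => g x s) t) :
    pdt (fun x t => f x t - g x t) x t = pdt f x t - pdt g x t :=
  deriv_fun_sub hf hg

theorem pdx_const_mul (c : ℝ) (hf : DifferentiableAt ℝ (fun y => f y t) x) :
    pdx (fun x t => c * f x t) x t = c * pdx f x t :=
  deriv_const_mul c hf

theorem pdx_fderiv_apply {E : Type*} [NormedAddCommGroup E] [NormedSpace ℝ E]
    {G : ℝ × ℝ → E →L[ℝ] ℝ} (hG : DifferentiableAt ℝ G (x, t)) (w : E) :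
    pdx (fun x t => G (x, t) w) x t = fderiv ℝ G (x, t) (1, 0) w := by
  simpa [pdx] using ((hasDerivAt_slice_fst hG).clm_apply (hasDerivAt_const x w)).deriv

theorem pdt_fderiv_apply {E : Type*} [NormedAddCommGroup E] [NormedSpace ℝ E]
    {G : ℝ × ℝ → E →L[ℝ] ℝ} (hG : DifferentiableAt ℝ G (x, t)) (w : E) :
    pdt (fun x t => G (x, t) w) x t = fderiv ℝ G (x, t) (0, 1) w := by
  simpa [pdt] using ((hasDerivAt_slice_snd hG).clm_apply (hasDerivAt_const t w)).deriv

theorem ContDiffOn.differentiableOn_pdx {n : WithTop ℕ∞} (hU : IsOpen U)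
    (hf : ContDiffOn ℝ n (fun p : ℝ × ℝ => f p.1 p.2) U) (hn : 2 ≤ n) :
    DifferentiableOn ℝ (fun p : ℝ × ℝ => pdx f p.1 p.2) U := by
  have hD : ContDiffOn ℝ 1 (fderiv ℝ (fun p : ℝ × ℝ => f p.1 p.2)) U :=
    hf.fderiv_of_isOpen hU hn
  refine ((hD.clm_apply (contDiffOn_const (c := ((1 : ℝ), (0 : ℝ))))).differentiableOn
    one_ne_zero).congr fun p hp => ?_
  have hn0 : n ≠ 0 := (lt_of_lt_of_le (by norm_num) hn).ne'
  exact pdx_eq_fderiv ((hf.differentiableOn hn0).differentiableAt (hU.mem_nhds hp))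

theorem pdt_pdx_eq_pdx_pdt (hU : IsOpen U)
    (hf : ContDiffOn ℝ 2 (fun p : ℝ × ℝ => f p.1 p.2) U) (hp : (x, t) ∈ U) :
    pdt (pdx f) x t = pdx (pdt f) x t := by
  set G := fderiv ℝ (fun p : ℝ × ℝ => f p.1 p.2)
  have hf' : ∀ q ∈ U, DifferentiableAt ℝ (fun p : ℝ × ℝ => f p.1 p.2) q := fun q hq =>
    (hf.differentiableOn two_ne_zero).differentiableAt (hU.mem_nhds hq)
  have hG : DifferentiableAt ℝ G (x, t) :=
    ((hf.fderiv_of_isOpen hU le_rfl).differentiableOn one_ne_zero).differentiableAt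
      (hU.mem_nhds hp)
  have hsymm : IsSymmSndFDerivAt ℝ (fun p : ℝ × ℝ => f p.1 p.2) (x, t) :=
    (hf.contDiffAt (hU.mem_nhds hp)).isSymmSndFDerivAt (by simp)
  calc pdt (pdx f) x t = pdt (fun x t => G (x, t) (1, 0)) x t :=
        pdt_congr hU (fun q hq => pdx_eq_fderiv (hf' q hq)) hp
    _ = fderiv ℝ G (x, t) (0, 1) (1, 0) := pdt_fderiv_apply hG _
    _ = fderiv ℝ G (x, t) (1, 0) (0, 1) := hsymm _ _
    _ = pdx (fun x t => G (x, t) (0, 1)) x t := (pdx_fderiv_apply hG _).symm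
    _ = pdx (pdt f) x t := pdx_congr hU (fun q hq => (pdt_eq_fderiv (hf' q hq)).symm) hp

theorem pdt_pdx_div_eq_pdx_pdx_div {u v : ℝ → ℝ → ℝ} (hU : IsOpen U)
    (hv : ContDiffOn ℝ 2 (fun p : ℝ × ℝ => v p.1 p.2) U)
    (hu : ContDiffOn ℝ 2 (fun p : ℝ × ℝ => u p.1 p.2) U)
    (hmass : ∀ x t, (x, t) ∈ U → pdt v x t = pdx u x t)
    (hp : (x, t) ∈ U) (hv0 : v x t ≠ 0) :
    pdt (fun x t => pdx v x t / v x t) x t = pdx (fun x t => pdx u x t / v x t) x t := by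
  have hv' := hv.differentiableOn two_ne_zero
  have hvxt : pdt (pdx v) x t = pdx (pdx u) x t :=
    (pdt_pdx_eq_pdx_pdt hU hv hp).trans (pdx_congr hU (fun q hq => hmass q.1 q.2 hq) hp)
  have hvx_t : HasDerivAt (fun s => pdx v x s) (pdx (pdx u) x t) t :=
    hvxt ▸ (hv.differentiableOn_pdx hU le_rfl).hasDerivAt_pdt hU hp
  have hv_t : HasDerivAt (fun s => v x s) (pdx u x t) t :=
    hmass x t hp ▸ hv'.hasDerivAt_pdt hU hp
  have hux_x : HasDerivAt (fun y => pdx u y t) (pdx (pdx u) x t) x :=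
    (hu.differentiableOn_pdx hU le_rfl).hasDerivAt_pdx hU hp
  have hv_x : HasDerivAt (fun y => v y t) (pdx v x t) x := hv'.hasDerivAt_pdx hU hp
  calc pdt (fun x t => pdx v x t / v x t) x t
      = (pdx (pdx u) x t * v x t - pdx v x t * pdx u x t) / v x t ^ 2 :=
        (hvx_t.fun_div hv_t hv0).deriv
    _ = (pdx (pdx u) x t * v x t - pdx u x t * pdx v x t) / v x t ^ 2 := by ring
    _ = pdx (fun x t => pdx u x t / v x t) x t := (hux_x.fun_div hv_x hv0).deriv.symm

end PartialDerivatives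

theorem effective_flux_identity_general
    (a b R ε : ℝ) (hb : 0 < b)
    (U : Set (ℝ × ℝ)) (hU : IsOpen U)
    (v u θ χ : ℝ → ℝ → ℝ)
    (hv : ContDiffOn ℝ 2 (fun p : ℝ × ℝ => v p.1 p.2) U)
    (hu : ContDiffOn ℝ 2 (fun p : ℝ × ℝ => u p.1 p.2) U)
    (hθ : ContDiffOn ℝ 2 (fun p : ℝ × ℝ => θ p.1 p.2) U)
    (hχ : ContDiffOn ℝ 2 (fun p : ℝ × ℝ => χ p.1 p.2) U)
    (hvb : ∀ x t, (x, t) ∈ U → b < v x t)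
    (hmass : ∀ x t, (x, t) ∈ U → pdt v x t = pdx u x t)
    (hmom : ∀ x t, (x, t) ∈ U →
      pdt u x t
        + pdx (fun x t => R * θ x t / (v x t - b) - a / (v x t) ^ 2) x t
      = pdx (fun x t => pdx u x t / v x t) x t
        - (ε / 2) * pdx (fun x t => (pdx χ x t) ^ 2 / (v x t) ^ 2) x t) :
    ∀ x t, (x, t) ∈ U →
      pdt (fun x t => u x t - pdx v x t / v x t) x t
        + pdx (fun x t => R * θ x t / (v x t - b)) x t
      = pdx (fun x t => a / (v x t) ^ 2 - (ε / 2) * (pdx χ x t / v x t) ^ 2) x t := by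
  intro x t hp
  have hv0 : v x t ≠ 0 := (hb.trans (hvb x t hp)).ne'
  have hvb0 : v x t - b ≠ 0 := sub_ne_zero.2 (hvb x t hp).ne'
  have hv' := hv.differentiableOn two_ne_zero
  have hv_x := (hv'.hasDerivAt_pdx hU hp).differentiableAt
  have hv_t := (hv'.hasDerivAt_pdt hU hp).differentiableAt
  have hvx_t := ((hv.differentiableOn_pdx hU le_rfl).hasDerivAt_pdt hU hp).differentiableAt
  have hu_t := ((hu.differentiableOn two_ne_zero).hasDerivAt_pdt hU hp).differentiableAt
  have hθ_x := ((hθ.differentiableOn two_ne_zero).hasDerivAt_pdx hU hp).differentiableAt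
  have hχx_x := ((hχ.differentiableOn_pdx hU le_rfl).hasDerivAt_pdx hU hp).differentiableAt
  have hpress : DifferentiableAt ℝ (fun y => R * θ y t / (v y t - b)) x := by
    fun_prop (disch := assumption)
  have hvdw : DifferentiableAt ℝ (fun y => a / v y t ^ 2) x := by
    fun_prop (disch := exact pow_ne_zero 2 hv0)
  have hcap : DifferentiableAt ℝ (fun y => pdx χ y t ^ 2 / v y t ^ 2) x := by
    fun_prop (disch := exact pow_ne_zero 2 hv0)
  have hrhs : pdx (fun x t => a / v x t ^ 2 - ε / 2 * (pdx χ x t / v x t) ^ 2) x t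
      = pdx (fun x t => a / v x t ^ 2) x t
        - ε / 2 * pdx (fun x t => pdx χ x t ^ 2 / v x t ^ 2) x t := by
    simp only [div_pow]
    rw [pdx_sub hvdw (hcap.const_mul _), pdx_const_mul _ hcap]
  have hm := hmom x t hp
  rw [pdx_sub hpress hvdw] at hm
  rw [pdt_sub hu_t (hvx_t.div hv_t hv0), pdt_pdx_div_eq_pdx_pdx_div hU hv hu hmass hp hv0, hrhs]
  linarith

/-- Effective-flux identity: for `C²` functions `v, u, θ, χ` on an open set
`U ⊆ ℝ²` with `v > b`, satisfying the mass equation `v_t = u_x` and the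
momentum equation
`u_t + (Rθ/(v−b) − a/v²)_x = (u_x/v)_x − (ε/2)(χ_x²/v²)_x`,
one has pointwise on `U`:
`∂_t(u − v_x/v) + ∂_x(Rθ/(v−b)) = ∂_x(a/v² − (ε/2)(χ_x/v)²)`. -/
theorem effective_flux_identity
    (a b R ε : ℝ) (ha : 0 < a) (hb : 0 < b) (hR : 0 < R) (hε : 0 < ε)
    (U : Set (ℝ × ℝ)) (hU : IsOpen U)
    (v u θ χ : ℝ → ℝ → ℝ)
    (hv : ContDiffOn ℝ 2 (fun p : ℝ × ℝ => v p.1 p.2) U)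
    (hu : ContDiffOn ℝ 2 (fun p : ℝ × ℝ => u p.1 p.2) U)
    (hθ : ContDiffOn ℝ 2 (fun p : ℝ × ℝ => θ p.1 p.2) U)
    (hχ : ContDiffOn ℝ 2 (fun p : ℝ × ℝ => χ p.1 p.2) U)
    (hvb : ∀ x t, (x, t) ∈ U → b < v x t)
    (hmass : ∀ x t, (x, t) ∈ U → pdt v x t = pdx u x t)
    (hmom : ∀ x t, (x, t) ∈ U →
      pdt u x t
        + pdx (fun x t => R * θ x t / (v x t - b) - a / (v x t) ^ 2) x t
      = pdx (fun x t => pdx u x t / v x t) x t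
        - (ε / 2) * pdx (fun x t => (pdx χ x t) ^ 2 / (v x t) ^ 2) x t) :
    ∀ x t, (x, t) ∈ U →
      pdt (fun x t => u x t - pdx v x t / v x t) x t
        + pdx (fun x t => R * θ x t / (v x t - b)) x t
      = pdx (fun x t => a / (v x t) ^ 2 - (ε / 2) * (pdx χ x t / v x t) ^ 2) x t :=
  effective_flux_identity_general a b R ε hb U hU v u θ χ hv hu hθ hχ hvb hmass hmom
end
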